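/- For all x, y, z ∈ ℂ^{n×r}, the inequality ‖x − y‖₂ · ‖x + y‖₂ ≤ ‖x − z‖₂ · ‖x + z‖₂ + ‖z − y‖₂ · ‖z + y‖₂ holds, where ‖·‖₂ is the Frobenius norm. -/

import Mathlib

open Matrix Filter
open scoped ComplexOrder

noncomputable def frob {p q : ℕ} (x : Matrix (Fin p) (Fin q) ℂ) : ℝ :=
  Real.sqrt (Matrix.trace (xᴴ * x)).re

noncomputable def rinner {p q : ℕ} (X Y : Matrix (Fin p) (Fin q) ℂ) : ℝ :=
  (Matrix.trace (Xᴴ * Y)).re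

/-- The square root of a positive semidefinite matrix, as `Matrix.PosSemidef.sqrt` was defined
in the older Mathlib (removed since). -/
noncomputable def posSemidefSqrt {m : Type*} [Fintype m] [DecidableEq m] {A : Matrix m m ℂ}
    (hA : A.PosSemidef) : Matrix m m ℂ :=
  (hA.1.eigenvectorUnitary : Matrix m m ℂ) *
    diagonal ((↑) ∘ Real.sqrt ∘ hA.1.eigenvalues) * (star hA.1.eigenvectorUnitary : Matrix m m ℂ)

noncomputable def nuclear {p q : ℕ} (x : Matrix (Fin p) (Fin q) ℂ) : ℝ :=
  (Matrix.trace (posSemidefSqrt (Matrix.posSemidef_conjTranspose_mul_self x))).re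

noncomputable def theta {n r : ℕ} (x : Matrix (Fin n) (Fin r) ℂ) : Matrix (Fin n) (Fin n) ℂ :=
  posSemidefSqrt (Matrix.posSemidef_self_mul_conjTranspose x)

noncomputable def psi {n r : ℕ} (x : Matrix (Fin n) (Fin r) ℂ) : Matrix (Fin n) (Fin n) ℂ :=
  frob x • theta x

noncomputable def Dmet {n r : ℕ} (x y : Matrix (Fin n) (Fin r) ℂ) : ℝ :=
  ⨅ U : Matrix.unitaryGroup (Fin r) ℂ, frob (x - y * (U : Matrix (Fin r) (Fin r) ℂ))

noncomputable def dmet {n r : ℕ} (x y : Matrix (Fin n) (Fin r) ℂ) : ℝ :=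
  ⨅ U : Matrix.unitaryGroup (Fin r) ℂ,
    frob (x - y * (U : Matrix (Fin r) (Fin r) ℂ)) * frob (x + y * (U : Matrix (Fin r) (Fin r) ℂ))

/-!
Identify `ℂ^{n×r}` with a real inner product space. For a self-adjoint isometry `R`, the
quadratic form `q x = ⟪R x, x⟫` satisfies `q x - q y = ⟪R (x - y), x + y⟫ ≤ ‖x - y‖ * ‖x + y‖`,
and `q x - q y` telescopes through `z`. So it suffices to pick `R` with
`⟪R (x - y), x + y⟫ = ‖x - y‖ * ‖x + y‖`: the reflection exchanging the directions of `x - y`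
and `x + y`. (Equivalently, `‖x - y‖ * ‖x + y‖` is the trace norm of `x ⊗ x - y ⊗ y`.)
-/

open scoped RealInnerProductSpace

section InnerProductSpace

variable {E : Type*} [NormedAddCommGroup E] [InnerProductSpace ℝ E]

theorem LinearMap.IsSymmetric.inner_map_sub_add {T : E →ₗ[ℝ] E} (hT : T.IsSymmetric)
    (x y : E) : ⟪T (x - y), x + y⟫ = ⟪T x, x⟫ - ⟪T y, y⟫ := by
  have hxy : ⟪T x, y⟫ = ⟪T y, x⟫ := by rw [hT, real_inner_comm]
  simp only [map_sub, inner_sub_left, inner_add_right, hxy]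
  ring

theorem Submodule.reflection_isSymmetric {𝕜 F : Type*} [RCLike 𝕜] [NormedAddCommGroup F]
    [InnerProductSpace 𝕜 F] (K : Submodule 𝕜 F) [K.HasOrthogonalProjection] :
    (K.reflection.toLinearEquiv : F →ₗ[𝕜] F).IsSymmetric := fun x y => by
  simpa using K.reflection.inner_map_map x (K.reflection y)

theorem inner_reflection_eq_norm_mul_norm (u v : E) :
    ⟪(ℝ ∙ (‖v‖ • u - ‖u‖ • v))ᗮ.reflection u, v⟫ = ‖u‖ * ‖v‖ := by
  set R := (ℝ ∙ (‖v‖ • u - ‖u‖ • v))ᗮ.reflection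
  have hR : R (‖v‖ • u) = ‖u‖ • v :=
    Submodule.reflection_sub (by simp only [norm_smul, norm_norm, mul_comm])
  have key : (‖u‖ * ‖v‖) * ⟪R u, v⟫ = (‖u‖ * ‖v‖) * (‖u‖ * ‖v‖) := by
    have := congrArg (fun w => ⟪w, v⟫) hR
    simp only [map_smul, real_inner_smul_left, real_inner_self_eq_norm_sq] at this
    linear_combination ‖u‖ * this
  rcases eq_or_ne (‖u‖ * ‖v‖) 0 with h | h
  · rcases mul_eq_zero.mp h with hu | hv
    · simp [norm_eq_zero.mp hu]
    · simp [norm_eq_zero.mp hv]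
  · exact mul_left_cancel₀ h key

theorem norm_sub_mul_norm_add_le (x y z : E) :
    ‖x - y‖ * ‖x + y‖ ≤ ‖x - z‖ * ‖x + z‖ + ‖z - y‖ * ‖z + y‖ := by
  set K := (ℝ ∙ (‖x + y‖ • (x - y) - ‖x - y‖ • (x + y)))ᗮ
  have hsymm := K.reflection_isSymmetric.inner_map_sub_add
  simp only [LinearEquiv.coe_coe, LinearIsometryEquiv.coe_toLinearEquiv] at hsymm
  have bound (p q : E) : ⟪K.reflection p, q⟫ ≤ ‖p‖ * ‖q‖ :=
    (real_inner_le_norm _ _).trans_eq (by rw [K.reflection.norm_map])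
  calc ‖x - y‖ * ‖x + y‖ = ⟪K.reflection (x - y), x + y⟫ :=
        (inner_reflection_eq_norm_mul_norm _ _).symm
    _ = ⟪K.reflection (x - z), x + z⟫ + ⟪K.reflection (z - y), z + y⟫ := by
      rw [hsymm, hsymm, hsymm]
      ring
    _ ≤ ‖x - z‖ * ‖x + z‖ + ‖z - y‖ * ‖z + y‖ := add_le_add (bound _ _) (bound _ _)

end InnerProductSpace

theorem frob_eq_norm_toLp_vec {p q : ℕ} (x : Matrix (Fin p) (Fin q) ℂ) :
    frob x = ‖WithLp.toLp 2 (vec x)‖ := by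
  rw [frob, ← Real.sqrt_sq (norm_nonneg _), @norm_sq_eq_re_inner ℂ,
    EuclideanSpace.inner_toLp_toLp, dotProduct_comm, star_vec_dotProduct_vec]
  rfl

/-- the parallelepiped triangle inequality
`‖x−y‖₂‖x+y‖₂ ≤ ‖x−z‖₂‖x+z‖₂ + ‖z−y‖₂‖z+y‖₂` for the Frobenius norm. -/
theorem frob_parallelepiped_triangle (n r : ℕ) (x y z : Matrix (Fin n) (Fin r) ℂ) :
    frob (x - y) * frob (x + y) ≤
      frob (x - z) * frob (x + z) + frob (z - y) * frob (z + y) := by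
  simp only [frob_eq_norm_toLp_vec, vec_sub, vec_add, WithLp.toLp_sub, WithLp.toLp_add]
  exact norm_sub_mul_norm_add_le _ _ _
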